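/- arXiv:0710.2281 — 2 statements merged into one kernel-verified Lean document; each statement's English description precedes it below -/
import Mathlib

section
/- For every β ∈ ℂ, the formal power series in two variables F(x,y) := Φ_β(−xy) = ∑_{n≥0} binom(β,n)·(−1)ⁿ·xⁿ·yⁿ/n! ∈ ℂ⟦x,y⟧ satisfies the identity ∂_x∂_y F = y·∂_y F − β·F. -/
/-- The generalized binomial coefficient `binom(β,n) = (1/n!) ∏_{j=0}^{n-1} (β - j)`. -/
noncomputable def genBinom {R : Type*} [CommRing R] [Algebra ℚ R] (β : R) (n : ℕ) : R :=
  (n.factorial : ℚ)⁻¹ • ∏ j ∈ Finset.range n, (β - (j : R))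

/-- The partial derivative `∂_i` on formal power series in two variables `x = X 0`, `y = X 1`. -/
noncomputable def pdMv (i : Fin 2) (F : MvPowerSeries (Fin 2) ℂ) : MvPowerSeries (Fin 2) ℂ :=
  fun d => ((d i : ℂ) + 1) * MvPowerSeries.coeff (R := ℂ) (d + Finsupp.single i 1) F

/-- `F(x,y) = Φ_β(-xy) = ∑_{n ≥ 0} binom(β,n) (-1)ⁿ xⁿ yⁿ / n!` in `ℂ⟦x,y⟧`. -/
noncomputable def Fser (β : ℂ) : MvPowerSeries (Fin 2) ℂ :=
  fun d => if d 0 = d 1 then ((d 0).factorial : ℂ)⁻¹ * (-1) ^ (d 0) * genBinom β (d 0) else 0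

/-!
Writing `F = ∑ cₙ xⁿ yⁿ` with `cₙ = (-1)ⁿ binom(β,n) / n!`, the operator `y ∂_y` multiplies the
coefficient of `xᵃ yᵇ` by `b`, so comparing coefficients of `xᵃ yᵇ` reduces the identity to
`(a+1)(b+1) F_{a+1,b+1} = (b - β) F_{a,b}`. Both sides vanish off the diagonal, and on it this is
the recurrence `(n+1)² c_{n+1} = (n - β) cₙ`, which follows from
`(n+1) binom(β,n+1) = (β - n) binom(β,n)`.
-/

open MvPowerSeries

theorem genBinom_succ_mul {R : Type*} [CommRing R] [Algebra ℚ R] (β : R) (n : ℕ) :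
    ((n : R) + 1) * genBinom β (n + 1) = (β - n) * genBinom β n := by
  have hn : ((n : ℚ) + 1) * ((n + 1).factorial : ℚ)⁻¹ = (n.factorial : ℚ)⁻¹ := by
    rw [Nat.factorial_succ]
    push_cast
    field_simp
  have hcast : ((n : R) + 1) = ((n : ℚ) + 1) • (1 : R) := by
    rw [add_smul, one_smul, Nat.cast_smul_eq_nsmul, nsmul_eq_mul, mul_one]
  rw [genBinom, genBinom, Finset.prod_range_succ, hcast, smul_one_mul, smul_smul, hn,
    mul_smul_comm, mul_comm]

theorem coeff_X_mul_pdMv (i : Fin 2) (G : MvPowerSeries (Fin 2) ℂ) (d : Fin 2 →₀ ℕ) :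
    coeff d (X i * pdMv i G) = d i * coeff d G := by
  rw [X, coeff_monomial_mul]
  by_cases h : 1 ≤ d i
  · have hd : d - Finsupp.single i 1 + Finsupp.single i 1 = d :=
      tsub_add_cancel_of_le (Finsupp.single_le_iff.mpr h)
    rw [if_pos (Finsupp.single_le_iff.mpr h), one_mul]
    change (((d - Finsupp.single i 1 : Fin 2 →₀ ℕ) i : ℂ) + 1) * _ = _
    rw [hd, Finsupp.tsub_apply, Finsupp.single_eq_same, Nat.cast_sub h, Nat.cast_one,
      sub_add_cancel]
  · rw [if_neg (mt Finsupp.single_le_iff.mp h), Nat.lt_one_iff.mp (not_le.mp h), Nat.cast_zero,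
      zero_mul]

theorem coeff_pdMv_pdMv (i j : Fin 2) (G : MvPowerSeries (Fin 2) ℂ) (d : Fin 2 →₀ ℕ) :
    coeff d (pdMv i (pdMv j G)) =
      ((d i : ℂ) + 1) * (((d + Finsupp.single i 1 : Fin 2 →₀ ℕ) j : ℂ) + 1) *
        coeff (d + Finsupp.single i 1 + Finsupp.single j 1) G :=
  (mul_assoc _ _ _).symm

theorem coeff_Fser (β : ℂ) (d : Fin 2 →₀ ℕ) :
    coeff d (Fser β) =
      if d 0 = d 1 then ((d 0).factorial : ℂ)⁻¹ * (-1) ^ (d 0) * genBinom β (d 0) else 0 :=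
  rfl

theorem Fser_diag_coeff_succ (β : ℂ) (n : ℕ) :
    ((n : ℂ) + 1) * ((n : ℂ) + 1) *
        (((n + 1).factorial : ℂ)⁻¹ * (-1) ^ (n + 1) * genBinom β (n + 1)) =
      ((n : ℂ) - β) * ((n.factorial : ℂ)⁻¹ * (-1) ^ n * genBinom β n) := by
  have hrec := genBinom_succ_mul β n
  have hn : ((n : ℂ) + 1) ≠ 0 := Nat.cast_add_one_ne_zero n
  have hfac : ((n.factorial : ℂ)) ≠ 0 := Nat.cast_ne_zero.2 n.factorial_ne_zero
  rw [Nat.factorial_succ, Nat.cast_mul, Nat.cast_succ]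
  calc ((n : ℂ) + 1) * ((n : ℂ) + 1) *
          ((((n : ℂ) + 1) * n.factorial)⁻¹ * (-1) ^ (n + 1) * genBinom β (n + 1))
      = -((n.factorial : ℂ)⁻¹ * (-1) ^ n * (((n : ℂ) + 1) * genBinom β (n + 1))) := by
        field_simp
        ring
    _ = _ := by rw [hrec]; ring

/-- `∂_x ∂_y F = y ∂_y F - β F`. -/
theorem stmt2 (β : ℂ) :
    pdMv 0 (pdMv 1 (Fser β))
      = MvPowerSeries.X 1 * pdMv 1 (Fser β) - MvPowerSeries.C (σ := Fin 2) (R := ℂ) β * Fser β := by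
  ext d
  rw [coeff_pdMv_pdMv, map_sub, coeff_X_mul_pdMv, coeff_C_mul, ← sub_mul,
    coeff_Fser, coeff_Fser]
  simp only [Finsupp.coe_add, Pi.add_apply, Finsupp.single_eq_same,
    Finsupp.single_eq_of_ne zero_ne_one, Finsupp.single_eq_of_ne one_ne_zero, add_zero,
    add_left_inj]
  split_ifs with h
  · rw [h, Fser_diag_coeff_succ]
  · rw [mul_zero, mul_zero]
end

section
/- Let d ≥ 1 and let Q ∈ ℂ[y₁,…,y_d] be a polynomial homogeneous of degree d for the grading deg y_k = k, satisfying ∂Q/∂y_k = ∂^kQ/∂y₁^k for all k = 1, …, d. Then Q = γ·S_d(y₁,…,y_d), where γ ∈ ℂ is the coefficient of the monomial y_d in Q. -/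
open MvPolynomial

/-- The elementary Schur polynomial `S_n(y₁,y₂,…) = ∑_{i₁+2i₂+⋯=n} ∏_k y_k^{i_k}/i_k!`,
in the polynomial ring `ℚ[y₁,y₂,…] ⊆ MvPolynomial ℕ ℚ` with `y_k = X k` for `k ≥ 1`. -/
noncomputable def schur (n : ℕ) : MvPolynomial ℕ ℚ :=
  ∑ i : Fin n → Fin (n + 1),
    if (∑ k : Fin n, (k.1 + 1) * (i k).1) = n then
      ∏ k : Fin n, C (((i k).1.factorial : ℚ)⁻¹) * X (k.1 + 1) ^ ((i k).1)
    else 0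

/-!
Write `Q = ∑ c_m y^m` and `a_m = m! c_m`, where `m! = ∏_j m_j!`. Comparing the coefficients of
`y^μ` on both sides of `∂Q/∂y_k = ∂^kQ/∂y₁^k` gives the exchange rule `a_{μ+e_k} = a_{μ+k e₁}`.
Trading each `y_k` for `y₁^k` then shows `a_m = a_{wt(m) e₁}` for every `m` supported in
`{1,…,d}`, and for `wt(m) = d` this is `a_{d e₁} = a_{e_d} = γ`. Hence `c_m = γ / m!`, which is
the coefficient of `y^m` in `γ S_d`.
-/

open Finsupp

theorem Finsupp.prod_factorial_add_single {σ : Type*} (μ : σ →₀ ℕ) (k : σ) (n : ℕ) :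
    ((μ + single k n).prod fun _ i => i.factorial) =
      (μ k + 1).ascFactorial n * μ.prod fun _ i => i.factorial := by
  have herase : (μ + single k n).erase k = μ.erase k := by
    rw [erase_add, erase_single, add_zero]
  rw [← mul_prod_erase' _ k _ (fun _ => Nat.factorial_zero),
    ← mul_prod_erase' μ k _ (fun _ => Nat.factorial_zero), herase, ← mul_assoc]
  simp only [coe_add, Pi.add_apply, single_eq_same]
  rw [← Nat.factorial_mul_ascFactorial, mul_comm (μ k).factorial]

theorem MvPolynomial.coeff_iterate_pderiv {R σ : Type*} [CommSemiring R]
    (p : MvPolynomial σ R) (μ : σ →₀ ℕ) (k : σ) (n : ℕ) :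
    coeff μ ((pderiv k)^[n] p) = coeff (μ + single k n) p * (μ k + 1).ascFactorial n := by
  induction n generalizing p with
  | zero => simp
  | succ n ih =>
    rw [Function.iterate_succ_apply, ih, coeff_pderiv, add_assoc, ← single_add,
      Nat.ascFactorial_succ]
    simp only [Finsupp.coe_add, Pi.add_apply, single_eq_same]
    push_cast
    ring

theorem MvPolynomial.coeff_iterate_pderiv_mul_prod_factorial {R σ : Type*} [CommSemiring R]
    (p : MvPolynomial σ R) (μ : σ →₀ ℕ) (k : σ) (n : ℕ) :
    coeff μ ((pderiv k)^[n] p) * ((μ.prod fun _ i => i.factorial : ℕ) : R) =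
      coeff (μ + single k n) p * (((μ + single k n).prod fun _ i => i.factorial : ℕ) : R) := by
  rw [coeff_iterate_pderiv, prod_factorial_add_single, Nat.cast_mul, mul_assoc]

section Exchange

variable {σ M : Type*} {a : (σ →₀ ℕ) → M} {s : Set σ} {w : σ → ℕ} {i : σ}

theorem Finsupp.apply_single_add_eq_of_exchange
    (hex : ∀ μ, ∀ k ∈ s, a (μ + single k 1) = a (μ + single i (w k))) {x : σ} (hx : x ∈ s)
    (b : ℕ) (ρ : σ →₀ ℕ) : a (single x b + ρ) = a (single i (b * w x) + ρ) := by
  induction b generalizing ρ with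
  | zero => simp
  | succ b ih =>
    calc a (single x (b + 1) + ρ) = a ((single x b + ρ) + single x 1) := by
          rw [single_add, add_right_comm]
      _ = a ((single x b + ρ) + single i (w x)) := hex _ x hx
      _ = a (single i (b * w x) + (ρ + single i (w x))) := by rw [add_assoc, ih]
      _ = a (single i ((b + 1) * w x) + ρ) := by
          rw [add_one_mul, single_add, add_comm ρ, add_assoc]

theorem Finsupp.apply_eq_apply_single_weight_of_exchange
    (hex : ∀ μ, ∀ k ∈ s, a (μ + single k 1) = a (μ + single i (w k))) {m : σ →₀ ℕ}
    (hm : ↑m.support ⊆ s) : a m = a (single i (weight w m)) := by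
  classical
  suffices h : ↑m.support ⊆ s → ∀ ν, a (m + ν) = a (single i (weight w m) + ν) by
    simpa using h hm 0
  clear hm
  induction m using Finsupp.induction_linear with
  | zero => simp
  | add f g ihf ihg =>
    intro hfg ν
    rw [support_add_eq_union, Finset.coe_union, Set.union_subset_iff] at hfg
    rw [add_assoc, ihf hfg.1, add_left_comm, ihg hfg.2, ← add_assoc, ← single_add, map_add,
      add_comm (weight w g)]
  | single x b =>
    intro hx ν
    rcases eq_or_ne b 0 with rfl | hb
    · simp
    rw [support_single x hb, Finset.coe_singleton, Set.singleton_subset_iff] at hx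
    rw [apply_single_add_eq_of_exchange hex hx, weight_single, smul_eq_mul]

end Exchange

namespace Finsupp

variable {M : Type*} [Zero M] {d : ℕ}

theorem prod_eq_prod_fin_of_support_subset_Icc {N : Type*} [CommMonoid N] {f : ℕ →₀ M}
    (hf : ↑f.support ⊆ Set.Icc 1 d) (g : ℕ → M → N) (hg : ∀ j, g j 0 = 1) :
    f.prod g = ∏ k : Fin d, g (k + 1) (f (k + 1)) := by
  rw [prod_of_support_subset f (s := Finset.Icc 1 d) (fun j hj => by simpa using hf hj) g
    (fun j _ => hg j), Fin.prod_univ_eq_prod_range (fun k => g (k + 1) (f (k + 1))),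
    Finset.range_eq_Ico, Finset.prod_Ico_add' (fun j => g j (f j)), zero_add,
    Finset.Ico_add_one_right_eq_Icc]

theorem eq_of_support_subset_Icc {f g : ℕ →₀ M} (hf : ↑f.support ⊆ Set.Icc 1 d)
    (hg : ↑g.support ⊆ Set.Icc 1 d) (h : ∀ k : Fin d, f (k + 1) = g (k + 1)) : f = g := by
  ext j
  by_cases hj : j ∈ Set.Icc 1 d
  · obtain ⟨hj1, hjd⟩ := hj
    simpa [Nat.sub_add_cancel hj1] using h ⟨j - 1, by omega⟩
  · rw [notMem_support_iff.mp fun h => hj (hf h), notMem_support_iff.mp fun h => hj (hg h)]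

end Finsupp

section SchurCoefficients

noncomputable def schurExponent (d : ℕ) (i : Fin d → Fin (d + 1)) : ℕ →₀ ℕ :=
  ∑ k : Fin d, single (k.1 + 1) (i k).1

variable {d : ℕ}

theorem schurExponent_apply_succ (i : Fin d → Fin (d + 1)) (k : Fin d) :
    schurExponent d i (k + 1) = i k := by
  rw [schurExponent, finsetSum_apply, Finset.sum_eq_single k]
  · simp
  · intro l _ hl
    exact single_eq_of_ne (by omega)
  · simp

theorem support_schurExponent_subset (i : Fin d → Fin (d + 1)) :
    ↑(schurExponent d i).support ⊆ Set.Icc 1 d := by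
  intro j hj
  obtain ⟨k, -, hk⟩ := Finset.mem_biUnion.mp (support_finsetSum hj)
  rw [Finset.mem_singleton.mp (support_single_subset hk)]
  exact ⟨by omega, k.2⟩

theorem schurExponent_injective : Function.Injective (schurExponent d) := fun i j h =>
  funext fun k => Fin.ext <| by
    rw [← schurExponent_apply_succ, ← schurExponent_apply_succ, h]

theorem weight_schurExponent (i : Fin d → Fin (d + 1)) :
    weight (fun k => k) (schurExponent d i) = ∑ k : Fin d, (k.1 + 1) * (i k).1 := by
  simp only [schurExponent, map_sum, weight_single, smul_eq_mul, mul_comm]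

theorem prod_factorial_schurExponent (i : Fin d → Fin (d + 1)) :
    ((schurExponent d i).prod fun _ n => n.factorial) = ∏ k : Fin d, (i k).1.factorial := by
  simp only [prod_eq_prod_fin_of_support_subset_Icc (support_schurExponent_subset i) _
    (fun _ => Nat.factorial_zero), schurExponent_apply_succ]

theorem exists_schurExponent_eq {m : ℕ →₀ ℕ} (hm : ↑m.support ⊆ Set.Icc 1 d)
    (hw : weight (fun k => k) m ≤ d) : ∃ i, schurExponent d i = m := by
  refine ⟨fun k => ⟨m (k + 1), Nat.lt_succ_of_le ((le_weight _ (by omega) m).trans hw)⟩,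
    eq_of_support_subset_Icc (support_schurExponent_subset _) hm fun k => ?_⟩
  rw [schurExponent_apply_succ]

theorem schur_eq_sum_monomial (d : ℕ) :
    schur d = ∑ i : Fin d → Fin (d + 1),
      if weight (fun k => k) (schurExponent d i) = d then
        monomial (schurExponent d i)
          ((((schurExponent d i).prod fun _ n => n.factorial : ℕ) : ℚ)⁻¹)
      else 0 := by
  refine Finset.sum_congr rfl fun i _ => ?_
  rw [weight_schurExponent, prod_factorial_schurExponent]
  split_ifs
  · rw [Finset.prod_mul_distrib, ← map_prod C, Nat.cast_prod, ← Finset.prod_inv_distrib]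
    simp only [X_pow_eq_monomial, schurExponent, ← monomial_sum_index]
  · rfl

open Classical in
theorem coeff_schur (m : ℕ →₀ ℕ) :
    coeff m (schur d) =
      if ↑m.support ⊆ Set.Icc 1 d ∧ weight (fun k => k) m = d then
        (((m.prod fun _ n => n.factorial : ℕ) : ℚ)⁻¹)
      else 0 := by
  simp only [schur_eq_sum_monomial, coeff_sum, apply_ite (coeff m), coeff_monomial, coeff_zero]
  split_ifs with hm
  · obtain ⟨i, rfl⟩ := exists_schurExponent_eq hm.1 hm.2.le
    rw [Finset.sum_eq_single i (fun j _ hj => by simp [schurExponent_injective.ne hj])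
      (by simp)]
    simp [hm.2]
  · refine Finset.sum_eq_zero fun i _ => ?_
    split_ifs with hw he
    · exact absurd ⟨he ▸ support_schurExponent_subset i, he ▸ hw⟩ hm
    all_goals rfl

end SchurCoefficients

/-- If `Q ∈ ℂ[y₁,…,y_d]` is homogeneous of degree `d ≥ 1` (for `deg y_k = k`) and satisfies
`∂Q/∂y_k = ∂ᵏQ/∂y₁ᵏ` for `k = 1,…,d`, then `Q = γ·S_d` where `γ` is the coefficient of the
monomial `y_d` in `Q`. -/
theorem stmt15 (d : ℕ) (hd : 1 ≤ d) (Q : MvPolynomial ℕ ℂ)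
    (hsupp : Q ∈ MvPolynomial.supported ℂ (Set.Icc 1 d))
    (hhom : Q.IsWeightedHomogeneous (fun k => k) d)
    (hsys : ∀ k : ℕ, 1 ≤ k → k ≤ d →
      pderiv k Q = (fun q => pderiv 1 q)^[k] Q) :
    Q = C (MvPolynomial.coeff (Finsupp.single d 1) Q)
        * MvPolynomial.map (algebraMap ℚ ℂ) (schur d) := by
  let a : (ℕ →₀ ℕ) → ℂ := fun μ => coeff μ Q * ((μ.prod fun _ n => n.factorial : ℕ) : ℂ)
  have hexchange : ∀ μ, ∀ k ∈ Set.Icc 1 d, a (μ + single k 1) = a (μ + single 1 k) :=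
    fun μ k hk => by
      simp only [a, ← coeff_iterate_pderiv_mul_prod_factorial, Function.iterate_one,
        hsys k hk.1 hk.2]
  ext m
  rw [coeff_C_mul, coeff_map, coeff_schur]
  split_ifs with hm
  · have hγ : a m = coeff (single d 1) Q := by
      rw [apply_eq_apply_single_weight_of_exchange hexchange hm.1, hm.2, ← zero_add (single 1 d),
        ← hexchange 0 d ⟨hd, le_rfl⟩, zero_add]
      simp [a]
    rw [map_inv₀, map_natCast, ← hγ, mul_inv_cancel_right₀
      (Nat.cast_ne_zero.mpr (prod_ne_zero_iff.mpr fun _ _ => Nat.factorial_ne_zero _))]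
  · have hQm : coeff m Q = 0 := by
      by_contra h
      have hvars := support_subset_vars_of_mem_support (MvPolynomial.mem_support_iff.mpr h)
      exact hm ⟨(Finset.coe_subset.mpr hvars).trans (mem_supported.mp hsupp), hhom h⟩
    rw [hQm, map_zero, mul_zero]
end
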